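/- For all real β > 0 and all real Δ > 0, the Fourier transforms of the restrictions of m⁺_{β,Δ} and m⁻_{β,Δ} to the real line satisfy: (i) they vanish for every real ξ with |ξ| > Δ; and (ii) for every real ξ with |ξ| ≤ Δ, the Fourier transform of m^±_{β,Δ} at ξ equals π·(e^{2πβ(Δ − |ξ|)} − e^{−2πβ(Δ − |ξ|)})/(e^{πβΔ} ∓ e^{−πβΔ})². -/

import Mathlib

/-!
Splitting the integral at `0` gives `𝓕 (e^{-2πβ|x|}) = h_β / π`, so Fourier inversion yields
`𝓕 h_β (ξ) = π e^{-2πβ|ξ|}`. Multiplying by `2 cos (2πΔx) = e^{2πiΔx} + e^{-2πiΔx}` shifts the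
transform by `±Δ`, so the transform of `h_β(x) (a - 2 cos (2πΔx))` is
`π (a e^{-2πβ|ξ|} - e^{-2πβ|ξ-Δ|} - e^{-2πβ|ξ+Δ|})`. For `a = e^{2πβΔ} + e^{-2πβΔ}` this
collapses to `π (e^{2πβ(Δ-|ξ|)} - e^{-2πβ|Δ-|ξ||})`, which vanishes for `|ξ| ≥ Δ`.
-/

open scoped Real FourierTransform
open MeasureTheory Set

noncomputable def mPlus (β Δ x : ℝ) : ℝ :=
  (β / (β ^ 2 + x ^ 2)) *
    ((Real.exp (2 * π * β * Δ) + Real.exp (-(2 * π * β * Δ)) - 2 * Real.cos (2 * π * Δ * x)) /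
      (Real.exp (π * β * Δ) - Real.exp (-(π * β * Δ))) ^ 2)

noncomputable def mMinus (β Δ x : ℝ) : ℝ :=
  (β / (β ^ 2 + x ^ 2)) *
    ((Real.exp (2 * π * β * Δ) + Real.exp (-(2 * π * β * Δ)) - 2 * Real.cos (2 * π * Δ * x)) /
      (Real.exp (π * β * Δ) + Real.exp (-(π * β * Δ))) ^ 2)

theorem Real.fourier_const_smul {V E : Type*} [NormedAddCommGroup V] [InnerProductSpace ℝ V]
    [MeasurableSpace V] [BorelSpace V] [FiniteDimensional ℝ V] [NormedAddCommGroup E]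
    [NormedSpace ℂ E] (c : ℂ) (f : V → E) : 𝓕 (c • f) = c • 𝓕 f :=
  VectorFourier.fourierIntegral_const_smul _ _ _ _ _

theorem Real.fourier_sub_two_cos_smul {E : Type*} [NormedAddCommGroup E] [NormedSpace ℂ E]
    {f : ℝ → E} (hf : Integrable f) (a θ ξ : ℝ) :
    𝓕 (fun x => ((a - 2 * Real.cos (2 * π * θ * x) : ℝ) : ℂ) • f x) ξ =
      (a : ℂ) • 𝓕 f ξ - 𝓕 f (ξ - θ) - 𝓕 f (ξ + θ) := by
  have hint (w : ℝ) : Integrable fun v : ℝ => 𝐞 (-(v * w)) • f v := by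
    simpa [mul_comm] using (Real.fourierIntegral_convergent_iff w).2 hf
  have hpt (v : ℝ) : 𝐞 (-(v * ξ)) • (((a - 2 * Real.cos (2 * π * θ * v) : ℝ) : ℂ) • f v) =
      (a : ℂ) • (𝐞 (-(v * ξ)) • f v) - 𝐞 (-(v * (ξ - θ))) • f v - 𝐞 (-(v * (ξ + θ))) • f v := by
    simp only [Circle.smul_def, smul_smul, ← sub_smul, Real.fourierChar_apply]
    congr 1
    push_cast
    rw [mul_sub, mul_assoc, Complex.two_cos, mul_add, ← Complex.exp_add, ← Complex.exp_add]
    ring_nf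
  simp only [Real.fourier_real_eq, hpt]
  rw [integral_sub, integral_sub, integral_smul]
  · exact (hint ξ).smul _
  · exact hint _
  · exact ((hint ξ).smul _).sub (hint _)
  · exact hint _

theorem integrable_exp_neg_mul_abs {b : ℝ} (hb : 0 < b) :
    Integrable fun x : ℝ => Real.exp (-(b * |x|)) := by
  rw [← integrableOn_univ, ← Iic_union_Ioi (a := (0 : ℝ))]
  refine IntegrableOn.union ?_ ?_
  · refine (integrableOn_exp_mul_Iic hb 0).congr_fun (fun x hx => ?_) measurableSet_Iic
    rw [abs_of_nonpos hx, mul_neg, neg_neg]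
  · refine (exp_neg_integrableOn_Ioi 0 hb).congr_fun (fun x hx => ?_) measurableSet_Ioi
    simp only [abs_of_pos (show 0 < x from hx), neg_mul]

theorem fourier_exp_neg_mul_abs {b : ℝ} (hb : 0 < b) (ξ : ℝ) :
    𝓕 (fun x : ℝ => (Real.exp (-(b * |x|)) : ℂ)) ξ =
      (2 * b / (b ^ 2 + (2 * π * ξ) ^ 2) : ℝ) := by
  set c : ℂ := b + 2 * π * ξ * Complex.I
  set d : ℂ := b - 2 * π * ξ * Complex.I
  have hc : 0 < c.re := by simpa [c] using hb
  have hd : 0 < d.re := by simpa [d] using hb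
  have on_Iic : EqOn (fun x : ℝ =>
      Complex.exp (↑(-2 * π * x * ξ) * Complex.I) • (Real.exp (-(b * |x|)) : ℂ))
      (fun x : ℝ => Complex.exp (d * x)) (Iic 0) := by
    intro x hx
    simp only [smul_eq_mul, Complex.ofReal_exp, ← Complex.exp_add,
      abs_of_nonpos (show x ≤ 0 from hx), d]
    congr 1; push_cast; ring
  have on_Ioi : EqOn (fun x : ℝ =>
      Complex.exp (↑(-2 * π * x * ξ) * Complex.I) • (Real.exp (-(b * |x|)) : ℂ))
      (fun x : ℝ => Complex.exp (-c * x)) (Ioi 0) := by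
    intro x hx
    simp only [smul_eq_mul, Complex.ofReal_exp, ← Complex.exp_add,
      abs_of_pos (show 0 < x from hx), c]
    congr 1; push_cast; ring
  rw [Real.fourier_real_eq_integral_exp_smul, ← setIntegral_univ, ← Iic_union_Ioi (a := (0 : ℝ)),
    setIntegral_union (Iic_disjoint_Ioi le_rfl) measurableSet_Ioi
      ((integrableOn_exp_mul_complex_Iic hd 0).congr_fun on_Iic.symm measurableSet_Iic)
      ((integrableOn_exp_mul_complex_Ioi (by simpa using hc) 0).congr_fun on_Ioi.symm
        measurableSet_Ioi),
    setIntegral_congr_fun measurableSet_Iic on_Iic, setIntegral_congr_fun measurableSet_Ioi on_Ioi,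
    integral_exp_mul_complex_Iic hd, integral_exp_mul_complex_Ioi (by simpa using hc)]
  have hc0 : c ≠ 0 := fun h => by simp [h] at hc
  have hd0 : d ≠ 0 := fun h => by simp [h] at hd
  have hcd : c * d = ((b ^ 2 + (2 * π * ξ) ^ 2 : ℝ) : ℂ) := by
    simp only [c, d]
    push_cast
    linear_combination (-(2 * π * ξ) ^ 2 : ℂ) * Complex.I_sq
  simp only [Complex.ofReal_zero, mul_zero, Complex.exp_zero]
  rw [Complex.ofReal_div, ← hcd]
  field_simp
  simp only [c, d]
  push_cast
  ring

noncomputable def halfPlanePoissonKernel (β x : ℝ) : ℝ := β / (β ^ 2 + x ^ 2)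

theorem integrable_halfPlanePoissonKernel {β : ℝ} (hβ : 0 < β) :
    Integrable (halfPlanePoissonKernel β) := by
  refine (integrable_inv_one_add_sq.comp_div hβ.ne' |>.const_mul β⁻¹).congr
    (.of_forall fun x => ?_)
  simp only [halfPlanePoissonKernel]
  field_simp

theorem fourier_exp_neg_two_pi_mul_abs {β : ℝ} (hβ : 0 < β) :
    𝓕 (fun x : ℝ => (Real.exp (-(2 * π * β * |x|)) : ℂ)) =
      fun ξ => ((π⁻¹ * halfPlanePoissonKernel β ξ : ℝ) : ℂ) := by
  ext ξ
  rw [fourier_exp_neg_mul_abs (by positivity), halfPlanePoissonKernel]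
  congr 1
  field_simp

theorem fourier_halfPlanePoissonKernel {β : ℝ} (hβ : 0 < β) (ξ : ℝ) :
    𝓕 (fun x : ℝ => (halfPlanePoissonKernel β x : ℂ)) ξ =
      (π * Real.exp (-(2 * π * β * |ξ|)) : ℝ) := by
  set g : ℝ → ℂ := fun x => (Real.exp (-(2 * π * β * |x|)) : ℂ)
  have hg : Integrable g := (integrable_exp_neg_mul_abs (by positivity)).ofReal
  have hFg : Integrable (𝓕 g) := by
    rw [fourier_exp_neg_two_pi_mul_abs hβ]
    exact ((integrable_halfPlanePoissonKernel hβ).const_mul π⁻¹).ofReal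
  have hinv : 𝓕⁻ (𝓕 g) = g := (by fun_prop : Continuous g).fourierInv_fourier_eq hg hFg
  have hP : (fun x : ℝ => (halfPlanePoissonKernel β x : ℂ)) = (π : ℂ) • 𝓕 g := by
    ext x
    rw [fourier_exp_neg_two_pi_mul_abs hβ]
    simp [Real.pi_ne_zero]
  have hFFg : 𝓕 (𝓕 g) ξ = g (-ξ) := by
    simpa only [Real.fourierInv_eq_fourier_neg, neg_neg] using congrFun hinv (-ξ)
  rw [hP, Real.fourier_const_smul, Pi.smul_apply, hFFg]
  simp [g]

theorem fourier_halfPlanePoissonKernel_mul_sub_two_cos {β : ℝ} (hβ : 0 < β) (a θ ξ : ℝ) :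
    𝓕 (fun x : ℝ =>
      ((halfPlanePoissonKernel β x * (a - 2 * Real.cos (2 * π * θ * x)) : ℝ) : ℂ)) ξ =
      (π * (a * Real.exp (-(2 * π * β * |ξ|)) - Real.exp (-(2 * π * β * |ξ - θ|)) -
        Real.exp (-(2 * π * β * |ξ + θ|))) : ℝ) := by
  have hfun : (fun x : ℝ =>
      ((halfPlanePoissonKernel β x * (a - 2 * Real.cos (2 * π * θ * x)) : ℝ) : ℂ)) =
      fun x => ((a - 2 * Real.cos (2 * π * θ * x) : ℝ) : ℂ) • (halfPlanePoissonKernel β x : ℂ) := by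
    ext x
    rw [smul_eq_mul, ← Complex.ofReal_mul, mul_comm]
  rw [hfun, Real.fourier_sub_two_cos_smul (integrable_halfPlanePoissonKernel hβ).ofReal,
    fourier_halfPlanePoissonKernel hβ, fourier_halfPlanePoissonKernel hβ,
    fourier_halfPlanePoissonKernel hβ]
  push_cast
  ring

theorem exp_neg_abs_shift_combination (u : ℝ) {Δ : ℝ} (hΔ : 0 ≤ Δ) (ξ : ℝ) :
    (Real.exp (u * Δ) + Real.exp (-(u * Δ))) * Real.exp (-(u * |ξ|)) -
        Real.exp (-(u * |ξ - Δ|)) - Real.exp (-(u * |ξ + Δ|)) =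
      Real.exp (u * (Δ - |ξ|)) - Real.exp (-(u * |(Δ - |ξ|)|)) := by
  have hshifts : Real.exp (-(u * |ξ - Δ|)) + Real.exp (-(u * |ξ + Δ|)) =
      Real.exp (-(u * |(Δ - |ξ|)|)) + Real.exp (-(u * (|ξ| + Δ))) := by
    rcases le_total 0 ξ with hξ | hξ
    · rw [abs_of_nonneg hξ, abs_sub_comm, abs_of_nonneg (by linarith : 0 ≤ ξ + Δ)]
    · rw [abs_of_nonpos hξ, abs_of_nonpos (by linarith : ξ - Δ ≤ 0),
        show Δ - -ξ = ξ + Δ by ring, show -(ξ - Δ) = -ξ + Δ by ring, add_comm]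
  have h1 : Real.exp (u * Δ) * Real.exp (-(u * |ξ|)) = Real.exp (u * (Δ - |ξ|)) := by
    rw [← Real.exp_add]; ring_nf
  have h2 : Real.exp (-(u * Δ)) * Real.exp (-(u * |ξ|)) = Real.exp (-(u * (|ξ| + Δ))) := by
    rw [← Real.exp_add]; ring_nf
  linear_combination h1 + h2 - hshifts

theorem fourier_halfPlanePoissonKernel_mul_sub_two_cos_div {β Δ : ℝ} (hβ : 0 < β) (hΔ : 0 ≤ Δ)
    (C ξ : ℝ) :
    𝓕 (fun x : ℝ => ((halfPlanePoissonKernel β x * ((Real.exp (2 * π * β * Δ) +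
      Real.exp (-(2 * π * β * Δ)) - 2 * Real.cos (2 * π * Δ * x)) / C) : ℝ) : ℂ)) ξ =
      ((π * (Real.exp (2 * π * β * (Δ - |ξ|)) - Real.exp (-(2 * π * β * |(Δ - |ξ|)|))) / C :
        ℝ) : ℂ) := by
  have hfun : (fun x : ℝ => ((halfPlanePoissonKernel β x * ((Real.exp (2 * π * β * Δ) +
      Real.exp (-(2 * π * β * Δ)) - 2 * Real.cos (2 * π * Δ * x)) / C) : ℝ) : ℂ)) =
      (C⁻¹ : ℂ) • fun x : ℝ => ((halfPlanePoissonKernel β x * (Real.exp (2 * π * β * Δ) +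
        Real.exp (-(2 * π * β * Δ)) - 2 * Real.cos (2 * π * Δ * x)) : ℝ) : ℂ) := by
    ext x
    simp only [Pi.smul_apply, smul_eq_mul]
    push_cast
    ring
  rw [hfun, Real.fourier_const_smul, Pi.smul_apply,
    fourier_halfPlanePoissonKernel_mul_sub_two_cos hβ, exp_neg_abs_shift_combination _ hΔ,
    smul_eq_mul]
  push_cast
  ring

theorem fourier_transforms (β Δ : ℝ) (hβ : 0 < β) (hΔ : 0 < Δ) :
    (∀ ξ : ℝ, Δ < |ξ| → 𝓕 (fun x : ℝ => (mPlus β Δ x : ℂ)) ξ = 0) ∧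
    (∀ ξ : ℝ, Δ < |ξ| → 𝓕 (fun x : ℝ => (mMinus β Δ x : ℂ)) ξ = 0) ∧
    (∀ ξ : ℝ, |ξ| ≤ Δ → 𝓕 (fun x : ℝ => (mPlus β Δ x : ℂ)) ξ =
      ((π * ((Real.exp (2 * π * β * (Δ - |ξ|)) - Real.exp (-(2 * π * β * (Δ - |ξ|)))) /
        (Real.exp (π * β * Δ) - Real.exp (-(π * β * Δ))) ^ 2) : ℝ) : ℂ)) ∧
    (∀ ξ : ℝ, |ξ| ≤ Δ → 𝓕 (fun x : ℝ => (mMinus β Δ x : ℂ)) ξ =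
      ((π * ((Real.exp (2 * π * β * (Δ - |ξ|)) - Real.exp (-(2 * π * β * (Δ - |ξ|)))) /
        (Real.exp (π * β * Δ) + Real.exp (-(π * β * Δ))) ^ 2) : ℝ) : ℂ)) := by
  have hm := fourier_halfPlanePoissonKernel_mul_sub_two_cos_div hβ hΔ.le
  have outside {ξ : ℝ} (hξ : Δ < |ξ|) (C : ℝ) :
      π * (Real.exp (2 * π * β * (Δ - |ξ|)) - Real.exp (-(2 * π * β * |(Δ - |ξ|)|))) / C = 0 := by
    rw [abs_of_neg (sub_neg.2 hξ), mul_neg, neg_neg, sub_self, mul_zero, zero_div]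
  have inside {ξ : ℝ} (hξ : |ξ| ≤ Δ) (C : ℝ) :
      π * (Real.exp (2 * π * β * (Δ - |ξ|)) - Real.exp (-(2 * π * β * |(Δ - |ξ|)|))) / C =
        π * ((Real.exp (2 * π * β * (Δ - |ξ|)) - Real.exp (-(2 * π * β * (Δ - |ξ|)))) / C) := by
    rw [abs_of_nonneg (sub_nonneg.2 hξ), mul_div_assoc]
  refine ⟨fun ξ hξ => ?_, fun ξ hξ => ?_, fun ξ hξ => ?_, fun ξ hξ => ?_⟩
  · exact (hm _ ξ).trans (by rw [outside hξ, Complex.ofReal_zero])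
  · exact (hm _ ξ).trans (by rw [outside hξ, Complex.ofReal_zero])
  · exact (hm _ ξ).trans (by rw [inside hξ])
  · exact (hm _ ξ).trans (by rw [inside hξ])
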